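/- Let C be a hyper-superalgebra over a field of characteristic ≠ 2 and let C̲ = Δ⁻¹(C₀ ⊗ C₀) be the pull-back of the even part along the coproduct. Then C̲ is the largest purely even super-subcoalgebra of C and is a Hopf subalgebra of C (a hyper-algebra), and the even primitives satisfy P(C)₀ = P(C̲). -/

import Mathlib

/-!
For `x ∈ C̲` the counit axiom writes `x` as a left slice `(ε ⊗ id) Δ x` of an element of
`C₀ ⊗ C₀`, so `x` is even. Let `π₁` be the odd projection. For even `y` we have
`Δ y ∈ C₀ ⊗ C₀ ⊕ C₁ ⊗ C₁`, so `y ∈ C̲` as soon as `(π₁ ⊗ π₁) Δ y = 0`. If `x ∈ C̲` and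
`y = (id ⊗ φ) Δ x` is a right slice of `Δ x`, then `y` is even and, by coassociativity,
`(π₁ ⊗ π₁) Δ y` is a slice of `(π₁ ⊗ (π₁ ⊗ id) Δ) Δ x`, which vanishes because
`(π₁ ⊗ id) Δ x = 0`; left slices are symmetric. Over a field, a tensor all of whose left and
right slices lie in a subspace `U` lies in `U ⊗ U`, so `C̲` is a subcoalgebra. On
`C₀ ⊗ C₀` the Koszul sign is trivial, which makes `C̲` closed under multiplication.
-/

open TensorProduct LinearMap

namespace TensorProduct

section Subspaces

variable {R M N X : Type*} [CommSemiring R] [AddCommMonoid M] [Module R M]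
  [AddCommMonoid N] [Module R N] [AddCommMonoid X] [Module R X]
  {S : Submodule R M} {T : Submodule R N}

theorem range_map_subtype_le_iff {P : Submodule R (M ⊗[R] N)} :
    range (map S.subtype T.subtype) ≤ P ↔ ∀ a ∈ S, ∀ b ∈ T, a ⊗ₜ[R] b ∈ P := by
  rw [← mapIncl, range_mapIncl, Submodule.map₂_le]
  rfl

theorem tmul_mem_range_map_subtype {a : M} {b : N} (ha : a ∈ S) (hb : b ∈ T) :
    a ⊗ₜ[R] b ∈ range (map S.subtype T.subtype) :=
  ⟨⟨a, ha⟩ ⊗ₜ ⟨b, hb⟩, rfl⟩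

theorem range_map_subtype_mono {S' : Submodule R M} {T' : Submodule R N} (hS : S ≤ S')
    (hT : T ≤ T') : range (map S.subtype T.subtype) ≤ range (map S'.subtype T'.subtype) :=
  range_map_subtype_le_iff.2 fun _ ha _ hb => tmul_mem_range_map_subtype (hS ha) (hT hb)

theorem map_eq_self_of_mem_range {f : M →ₗ[R] M} {g : N →ₗ[R] N} (hf : ∀ a ∈ S, f a = a)
    (hg : ∀ b ∈ T, g b = b) {t : M ⊗[R] N} (ht : t ∈ range (map S.subtype T.subtype)) :
    map f g t = t :=
  range_map_subtype_le_iff (P := eqLocus (map f g) .id).2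
    (fun a ha b hb => by simp [hf a ha, hg b hb]) ht

theorem rTensor_eq_zero_of_mem_range {f : M →ₗ[R] X} (hf : ∀ a ∈ S, f a = 0) {t : M ⊗[R] N}
    (ht : t ∈ range (map S.subtype T.subtype)) : rTensor N f t = 0 :=
  range_map_subtype_le_iff (P := ker (rTensor N f)).2 (fun a ha b _ => by simp [hf a ha]) ht

theorem lTensor_eq_zero_of_mem_range {g : N →ₗ[R] X} (hg : ∀ b ∈ T, g b = 0) {t : M ⊗[R] N}
    (ht : t ∈ range (map S.subtype T.subtype)) : lTensor M g t = 0 :=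
  range_map_subtype_le_iff (P := ker (lTensor M g)).2 (fun a _ b hb => by simp [hg b hb]) ht

end Subspaces

section Slices

variable {R M N M' N' : Type*} [CommSemiring R] [AddCommMonoid M] [Module R M]
  [AddCommMonoid N] [Module R N] [AddCommMonoid M'] [Module R M'] [AddCommMonoid N'] [Module R N']

def sliceLeft (φ : M →ₗ[R] R) : M ⊗[R] N →ₗ[R] N :=
  (TensorProduct.lid R N).toLinearMap ∘ₗ rTensor N φ

def sliceRight (φ : N →ₗ[R] R) : M ⊗[R] N →ₗ[R] M :=
  (TensorProduct.rid R M).toLinearMap ∘ₗ lTensor M φ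

@[simp]
theorem sliceLeft_tmul (φ : M →ₗ[R] R) (m : M) (n : N) : sliceLeft φ (m ⊗ₜ n) = φ m • n := by
  simp [sliceLeft]

@[simp]
theorem sliceRight_tmul (φ : N →ₗ[R] R) (m : M) (n : N) : sliceRight φ (m ⊗ₜ n) = φ n • m := by
  simp [sliceRight]

theorem sliceLeft_comm (φ : M →ₗ[R] R) (t : M ⊗[R] N) :
    sliceLeft φ t = sliceRight φ (TensorProduct.comm R M N t) := by
  induction t using TensorProduct.induction_on <;> simp_all

theorem map_sliceLeft (g : N →ₗ[R] N') (φ : M →ₗ[R] R) (t : M ⊗[R] N) :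
    g (sliceLeft φ t) = sliceLeft φ (lTensor M g t) := by
  induction t using TensorProduct.induction_on <;> simp_all

theorem map_sliceRight (f : M →ₗ[R] M') (φ : N →ₗ[R] R) (t : M ⊗[R] N) :
    f (sliceRight φ t) = sliceRight φ (rTensor N f t) := by
  induction t using TensorProduct.induction_on <;> simp_all

theorem sliceLeft_mem {S : Submodule R M} {T : Submodule R N} {t : M ⊗[R] N}
    (ht : t ∈ range (map S.subtype T.subtype)) (φ : M →ₗ[R] R) : sliceLeft φ t ∈ T :=
  range_map_subtype_le_iff (P := T.comap (sliceLeft φ)).2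
    (fun _ _ _ hb => by simpa using T.smul_mem _ hb) ht

theorem sliceRight_mem {S : Submodule R M} {T : Submodule R N} {t : M ⊗[R] N}
    (ht : t ∈ range (map S.subtype T.subtype)) (φ : N →ₗ[R] R) : sliceRight φ t ∈ S :=
  range_map_subtype_le_iff (P := S.comap (sliceRight φ)).2
    (fun _ ha _ _ => by simpa using S.smul_mem _ ha) ht

end Slices

section Separation

variable {R M N : Type*} [CommRing R] [AddCommGroup M] [Module R M]
  [AddCommGroup N] [Module R N]

theorem eq_zero_of_forall_sliceRight_eq_zero [Module.Free R N] {t : M ⊗[R] N}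
    (h : ∀ φ : N →ₗ[R] R, sliceRight φ t = 0) : t = 0 := by
  let b := Module.Free.chooseBasis R N
  have coord : ∀ u i, equivFinsuppOfBasisRight b u i = sliceRight (M := M) (b.coord i) u := by
    intro u i
    induction u using TensorProduct.induction_on with
    | zero => simp
    | tmul m n => simp
    | add u v hu hv => simp [hu, hv]
  apply (equivFinsuppOfBasisRight b).injective
  ext i
  simp [coord, h]

theorem eq_zero_of_forall_sliceLeft_eq_zero [Module.Free R M] {t : M ⊗[R] N}
    (h : ∀ φ : M →ₗ[R] R, sliceLeft φ t = 0) : t = 0 :=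
  (TensorProduct.comm R M N).map_eq_zero_iff.1 <|
    eq_zero_of_forall_sliceRight_eq_zero fun φ => by rw [← sliceLeft_comm, h]

end Separation

theorem mem_range_map_subtype_of_forall_slice_mem {k M N : Type*} [Field k] [AddCommGroup M]
    [Module k M] [AddCommGroup N] [Module k N] {S : Submodule k M} {T : Submodule k N}
    {t : M ⊗[k] N} (hr : ∀ φ, sliceRight φ t ∈ S) (hl : ∀ φ, sliceLeft φ t ∈ T) :
    t ∈ range (map S.subtype T.subtype) := by
  obtain ⟨S', hS'⟩ := S.exists_isCompl
  obtain ⟨T', hT'⟩ := T.exists_isCompl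
  set p := S.projectionOnto S' hS'
  set q := T.projectionOnto T' hT'
  have hp : rTensor N (S.subtype ∘ₗ p) t = t := sub_eq_zero.1 <|
    eq_zero_of_forall_sliceRight_eq_zero fun φ => by
      rw [map_sub, ← map_sliceRight, comp_apply,
        Submodule.projectionOnto_apply_left hS' ⟨_, hr φ⟩, Submodule.subtype_apply, sub_self]
  have hq : lTensor M (T.subtype ∘ₗ q) t = t := sub_eq_zero.1 <|
    eq_zero_of_forall_sliceLeft_eq_zero fun φ => by
      rw [map_sub, ← map_sliceLeft, comp_apply,
        Submodule.projectionOnto_apply_left hT' ⟨_, hl φ⟩, Submodule.subtype_apply, sub_self]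
  refine ⟨map p q t, ?_⟩
  rw [← comp_apply, ← map_comp, ← lTensor_comp_rTensor, comp_apply, hp, hq]

end TensorProduct

section Coassociativity

variable {R C : Type*} [CommSemiring R] [AddCommMonoid C] [Module R C] {Δ : C →ₗ[R] C ⊗[R] C}

theorem assoc_rTensor_map_comp_comul
    (hcoassoc : (TensorProduct.assoc R C C C).toLinearMap ∘ₗ rTensor C Δ ∘ₗ Δ = lTensor C Δ ∘ₗ Δ)
    (f g : C →ₗ[R] C) (x : C) :
    TensorProduct.assoc R C C C (rTensor C (map f g ∘ₗ Δ) (Δ x)) =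
      lTensor C (rTensor C g ∘ₗ Δ) (rTensor C f (Δ x)) := by
  have hcoassoc_x : TensorProduct.assoc R C C C (rTensor C Δ (Δ x)) = lTensor C Δ (Δ x) :=
    LinearMap.congr_fun hcoassoc x
  calc TensorProduct.assoc R C C C (rTensor C (map f g ∘ₗ Δ) (Δ x))
      = map f (map g .id) (TensorProduct.assoc R C C C (rTensor C Δ (Δ x))) := by
        rw [map_map_assoc, rTensor_comp_apply]
        rfl
    _ = map f (rTensor C g) (lTensor C Δ (Δ x)) := by
        rw [hcoassoc_x]
        rfl
    _ = lTensor C (rTensor C g ∘ₗ Δ) (rTensor C f (Δ x)) := by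
        rw [← comp_apply (map _ _), map_comp_lTensor, ← lTensor_comp_rTensor]
        rfl

theorem assoc_symm_lTensor_map_comp_comul
    (hcoassoc : (TensorProduct.assoc R C C C).toLinearMap ∘ₗ rTensor C Δ ∘ₗ Δ = lTensor C Δ ∘ₗ Δ)
    (f g : C →ₗ[R] C) (x : C) :
    (TensorProduct.assoc R C C C).symm (lTensor C (map f g ∘ₗ Δ) (Δ x)) =
      rTensor C (lTensor C f ∘ₗ Δ) (lTensor C g (Δ x)) := by
  have hcoassoc_x : TensorProduct.assoc R C C C (rTensor C Δ (Δ x)) = lTensor C Δ (Δ x) :=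
    LinearMap.congr_fun hcoassoc x
  calc (TensorProduct.assoc R C C C).symm (lTensor C (map f g ∘ₗ Δ) (Δ x))
      = map (map .id f) g ((TensorProduct.assoc R C C C).symm (lTensor C Δ (Δ x))) := by
        rw [map_map_assoc_symm, lTensor_comp_apply]
        rfl
    _ = map (lTensor C f) g (rTensor C Δ (Δ x)) := by
        rw [← hcoassoc_x, LinearEquiv.symm_apply_apply]
        rfl
    _ = rTensor C (lTensor C f ∘ₗ Δ) (lTensor C g (Δ x)) := by
        rw [← comp_apply (map _ _), map_comp_rTensor, ← rTensor_comp_lTensor]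
        rfl

end Coassociativity

section GradedProjection

variable {ι R A : Type*} [DecidableEq ι] [AddMonoid ι] [CommSemiring R] [Semiring A]
  [Algebra R A] (𝒜 : ι → Submodule R A) [GradedAlgebra 𝒜]

theorem GradedAlgebra.proj_of_mem {i : ι} {x : A} (hx : x ∈ 𝒜 i) :
    GradedAlgebra.proj 𝒜 i x = x :=
  DirectSum.decompose_of_mem_same 𝒜 hx

theorem GradedAlgebra.proj_of_mem_ne {i j : ι} {x : A} (hx : x ∈ 𝒜 i) (hij : i ≠ j) :
    GradedAlgebra.proj 𝒜 j x = 0 := by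
  simp [DirectSum.decompose_of_mem_ne 𝒜 hx hij]

end GradedProjection

section SuperBialgebra

variable {k C : Type*} [Field k] [Ring C] [Algebra k C]

/-- `C̲ = Δ⁻¹(C₀ ⊗ C₀)`. -/
abbrev evenPreimage (𝒞 : ZMod 2 → Submodule k C) (Δ : C →ₗ[k] C ⊗[k] C) : Submodule k C :=
  Submodule.comap Δ (range (map (𝒞 0).subtype (𝒞 0).subtype))

variable {𝒞 : ZMod 2 → Submodule k C} {Δ : C →ₗ[k] C ⊗[k] C}

theorem evenPreimage_le_even {ε : C →ₗ[k] k}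
    (hcounit_l : ∀ x : C, TensorProduct.lid k C (rTensor C ε (Δ x)) = x) :
    evenPreimage 𝒞 Δ ≤ 𝒞 0 := fun x hx =>
  hcounit_l x ▸ sliceLeft_mem hx ε

theorem le_evenPreimage {V : Submodule k C} (hV : V ≤ 𝒞 0)
    (hΔV : ∀ x ∈ V, Δ x ∈ range (map V.subtype V.subtype)) : V ≤ evenPreimage 𝒞 Δ :=
  fun x hx => range_map_subtype_mono hV hV (hΔV x hx)

variable [GradedAlgebra 𝒞]

theorem rTensor_proj_one_comul_eq_zero {x : C} (hx : x ∈ evenPreimage 𝒞 Δ) :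
    rTensor C (GradedAlgebra.proj 𝒞 1) (Δ x) = 0 :=
  rTensor_eq_zero_of_mem_range (fun _ ha => GradedAlgebra.proj_of_mem_ne 𝒞 ha zero_ne_one) hx

theorem lTensor_proj_one_comul_eq_zero {x : C} (hx : x ∈ evenPreimage 𝒞 Δ) :
    lTensor C (GradedAlgebra.proj 𝒞 1) (Δ x) = 0 :=
  lTensor_eq_zero_of_mem_range (fun _ hb => GradedAlgebra.proj_of_mem_ne 𝒞 hb zero_ne_one) hx

theorem mem_evenPreimage_of_map_proj_one_eq_zero
    (hΔ_graded_even : ∀ x ∈ 𝒞 0, Δ x ∈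
      range (map (𝒞 0).subtype (𝒞 0).subtype) ⊔ range (map (𝒞 1).subtype (𝒞 1).subtype))
    {y : C} (hy : y ∈ 𝒞 0)
    (h : map (GradedAlgebra.proj 𝒞 1) (GradedAlgebra.proj 𝒞 1) (Δ y) = 0) :
    y ∈ evenPreimage 𝒞 Δ := by
  obtain ⟨u, hu, v, hv, huv⟩ := Submodule.mem_sup.1 (hΔ_graded_even y hy)
  have hu1 : map (GradedAlgebra.proj 𝒞 1) (GradedAlgebra.proj 𝒞 1) u = 0 := by
    rw [← lTensor_comp_rTensor, comp_apply,
      rTensor_eq_zero_of_mem_range (fun _ ha => GradedAlgebra.proj_of_mem_ne 𝒞 ha zero_ne_one) hu,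
      map_zero]
  have hv1 : map (GradedAlgebra.proj 𝒞 1) (GradedAlgebra.proj 𝒞 1) v = v :=
    map_eq_self_of_mem_range (fun _ => GradedAlgebra.proj_of_mem 𝒞)
      (fun _ => GradedAlgebra.proj_of_mem 𝒞) hv
  rw [← huv, map_add, hu1, hv1, zero_add] at h
  rw [Submodule.mem_comap, ← huv, h, add_zero]
  exact hu

theorem sliceRight_comul_mem_evenPreimage
    (hΔ_graded_even : ∀ x ∈ 𝒞 0, Δ x ∈
      range (map (𝒞 0).subtype (𝒞 0).subtype) ⊔ range (map (𝒞 1).subtype (𝒞 1).subtype))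
    (hcoassoc : (TensorProduct.assoc k C C C).toLinearMap ∘ₗ rTensor C Δ ∘ₗ Δ = lTensor C Δ ∘ₗ Δ)
    {x : C} (hx : x ∈ evenPreimage 𝒞 Δ) (φ : C →ₗ[k] k) :
    sliceRight φ (Δ x) ∈ evenPreimage 𝒞 Δ := by
  refine mem_evenPreimage_of_map_proj_one_eq_zero hΔ_graded_even (sliceRight_mem hx φ) ?_
  have h : rTensor C (map (GradedAlgebra.proj 𝒞 1) (GradedAlgebra.proj 𝒞 1) ∘ₗ Δ) (Δ x) = 0 := by
    apply (TensorProduct.assoc k C C C).injective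
    rw [assoc_rTensor_map_comp_comul hcoassoc, rTensor_proj_one_comul_eq_zero hx, map_zero,
      map_zero]
  rw [map_sliceRight, map_sliceRight, ← rTensor_comp_apply, h, map_zero]

theorem sliceLeft_comul_mem_evenPreimage
    (hΔ_graded_even : ∀ x ∈ 𝒞 0, Δ x ∈
      range (map (𝒞 0).subtype (𝒞 0).subtype) ⊔ range (map (𝒞 1).subtype (𝒞 1).subtype))
    (hcoassoc : (TensorProduct.assoc k C C C).toLinearMap ∘ₗ rTensor C Δ ∘ₗ Δ = lTensor C Δ ∘ₗ Δ)
    {x : C} (hx : x ∈ evenPreimage 𝒞 Δ) (φ : C →ₗ[k] k) :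
    sliceLeft φ (Δ x) ∈ evenPreimage 𝒞 Δ := by
  refine mem_evenPreimage_of_map_proj_one_eq_zero hΔ_graded_even (sliceLeft_mem hx φ) ?_
  have h : lTensor C (map (GradedAlgebra.proj 𝒞 1) (GradedAlgebra.proj 𝒞 1) ∘ₗ Δ) (Δ x) = 0 := by
    apply (TensorProduct.assoc k C C C).symm.injective
    rw [assoc_symm_lTensor_map_comp_comul hcoassoc, lTensor_proj_one_comul_eq_zero hx, map_zero,
      map_zero]
  rw [map_sliceLeft, map_sliceLeft, ← lTensor_comp_apply, h, map_zero]

theorem comul_mem_range_map_evenPreimage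
    (hΔ_graded_even : ∀ x ∈ 𝒞 0, Δ x ∈
      range (map (𝒞 0).subtype (𝒞 0).subtype) ⊔ range (map (𝒞 1).subtype (𝒞 1).subtype))
    (hcoassoc : (TensorProduct.assoc k C C C).toLinearMap ∘ₗ rTensor C Δ ∘ₗ Δ = lTensor C Δ ∘ₗ Δ)
    {x : C} (hx : x ∈ evenPreimage 𝒞 Δ) :
    Δ x ∈ range (map (evenPreimage 𝒞 Δ).subtype (evenPreimage 𝒞 Δ).subtype) :=
  mem_range_map_subtype_of_forall_slice_mem
    (sliceRight_comul_mem_evenPreimage hΔ_graded_even hcoassoc hx)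
    (sliceLeft_comul_mem_evenPreimage hΔ_graded_even hcoassoc hx)

theorem one_mem_evenPreimage (hΔ_one : Δ 1 = 1 ⊗ₜ[k] 1) : (1 : C) ∈ evenPreimage 𝒞 Δ := by
  rw [Submodule.mem_comap, hΔ_one]
  exact tmul_mem_range_map_subtype (SetLike.one_mem_graded 𝒞) (SetLike.one_mem_graded 𝒞)

theorem mul_mem_evenPreimage {M2 : C ⊗[k] C →ₗ[k] C ⊗[k] C →ₗ[k] C ⊗[k] C}
    (hM2 : ∀ (i j : ZMod 2) (a : C), ∀ b ∈ 𝒞 i, ∀ c ∈ 𝒞 j, ∀ d : C,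
      M2 (a ⊗ₜ[k] b) (c ⊗ₜ[k] d) = ((-1 : ℤ) ^ (i.val * j.val)) • ((a * c) ⊗ₜ[k] (b * d)))
    (hΔ_mul : ∀ x y : C, Δ (x * y) = M2 (Δ x) (Δ y)) {x y : C}
    (hx : x ∈ evenPreimage 𝒞 Δ) (hy : y ∈ evenPreimage 𝒞 Δ) : x * y ∈ evenPreimage 𝒞 Δ := by
  set E := range (map (𝒞 0).subtype (𝒞 0).subtype)
  have hM2_even : ∀ a ∈ 𝒞 0, ∀ b ∈ 𝒞 0, E ≤ E.comap (M2 (a ⊗ₜ b)) := fun a ha b hb =>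
    range_map_subtype_le_iff.2 fun c hc d hd => by
      rw [Submodule.mem_comap, hM2 0 0 a b hb c hc d, ZMod.val_zero, mul_zero, pow_zero, one_smul]
      exact tmul_mem_range_map_subtype (SetLike.mul_mem_graded ha hc)
        (SetLike.mul_mem_graded hb hd)
  rw [Submodule.mem_comap, hΔ_mul]
  exact range_map_subtype_le_iff (P := E.comap (M2.flip (Δ y))).2
    (fun a ha b hb => hM2_even a ha b hb hy) hx

theorem primitive_mem_evenPreimage {x : C} (hx : x ∈ 𝒞 0) (hΔx : Δ x = 1 ⊗ₜ x + x ⊗ₜ 1) :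
    x ∈ evenPreimage 𝒞 Δ := by
  have h1 := SetLike.one_mem_graded 𝒞
  rw [Submodule.mem_comap, hΔx]
  exact add_mem (tmul_mem_range_map_subtype h1 hx) (tmul_mem_range_map_subtype hx h1)

end SuperBialgebra

theorem even_part_of_hyper_superalgebra_general
    (k : Type*) [Field k]
    (C : Type*) [Ring C] [Algebra k C]
    (𝒞 : ZMod 2 → Submodule k C) [GradedAlgebra 𝒞]
    (Δ : C →ₗ[k] C ⊗[k] C) (ε : C →ₗ[k] k)
    -- Koszul (super) multiplication on `C ⊗ C`:
    (M2 : C ⊗[k] C →ₗ[k] C ⊗[k] C →ₗ[k] C ⊗[k] C)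
    (hM2 : ∀ (i j : ZMod 2) (a : C), ∀ b ∈ 𝒞 i, ∀ c ∈ 𝒞 j, ∀ d : C,
      M2 (a ⊗ₜ[k] b) (c ⊗ₜ[k] d) = ((-1 : ℤ) ^ (i.val * j.val)) • ((a * c) ⊗ₜ[k] (b * d)))
    -- superbialgebra axioms:
    (hΔ_one : Δ 1 = 1 ⊗ₜ[k] 1)
    (hΔ_mul : ∀ x y : C, Δ (x * y) = M2 (Δ x) (Δ y))
    (hcoassoc : (TensorProduct.assoc k C C C).toLinearMap ∘ₗ (LinearMap.rTensor C Δ) ∘ₗ Δ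
        = (LinearMap.lTensor C Δ) ∘ₗ Δ)
    (hcounit_l : ∀ x : C, (TensorProduct.lid k C) ((LinearMap.rTensor C ε) (Δ x)) = x)
    -- the comultiplication is graded (a supercoalgebra): even/odd parts map correctly
    (hΔ_graded_even : ∀ x ∈ 𝒞 0, Δ x ∈
        LinearMap.range (TensorProduct.map (𝒞 0).subtype (𝒞 0).subtype) ⊔
        LinearMap.range (TensorProduct.map (𝒞 1).subtype (𝒞 1).subtype)) :
    -- define `C̲ := Δ⁻¹(C₀ ⊗ C₀)`
    (Submodule.comap Δ
        (LinearMap.range (TensorProduct.map (𝒞 0).subtype (𝒞 0).subtype)) ≤ 𝒞 0) ∧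
    -- `C̲` is a subcoalgebra
    (∀ x ∈ Submodule.comap Δ
        (LinearMap.range (TensorProduct.map (𝒞 0).subtype (𝒞 0).subtype)),
      Δ x ∈ LinearMap.range (TensorProduct.map
        (Submodule.comap Δ
          (LinearMap.range (TensorProduct.map (𝒞 0).subtype (𝒞 0).subtype))).subtype
        (Submodule.comap Δ
          (LinearMap.range (TensorProduct.map (𝒞 0).subtype (𝒞 0).subtype))).subtype)) ∧
    -- it is the largest purely even subcoalgebra: every subcoalgebra contained in `C₀`
    -- is contained in `C̲`
    (∀ V : Submodule k C, V ≤ 𝒞 0 →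
      (∀ x ∈ V, Δ x ∈ LinearMap.range (TensorProduct.map V.subtype V.subtype)) →
      V ≤ Submodule.comap Δ
        (LinearMap.range (TensorProduct.map (𝒞 0).subtype (𝒞 0).subtype))) ∧
    -- `C̲` is a subalgebra (hence a Hopf subalgebra of `C`, a hyper-algebra)
    ((1 : C) ∈ Submodule.comap Δ
        (LinearMap.range (TensorProduct.map (𝒞 0).subtype (𝒞 0).subtype)) ∧
      ∀ x y : C,
        x ∈ Submodule.comap Δ
          (LinearMap.range (TensorProduct.map (𝒞 0).subtype (𝒞 0).subtype)) →
        y ∈ Submodule.comap Δ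
          (LinearMap.range (TensorProduct.map (𝒞 0).subtype (𝒞 0).subtype)) →
        x * y ∈ Submodule.comap Δ
          (LinearMap.range (TensorProduct.map (𝒞 0).subtype (𝒞 0).subtype))) ∧
    -- even primitives: `P(C) ⊓ C₀ = P(C) ⊓ C̲`
    (LinearMap.ker (Δ - ((TensorProduct.mk k C C) 1 + (TensorProduct.mk k C C).flip 1))
        ⊓ 𝒞 0
      = LinearMap.ker (Δ - ((TensorProduct.mk k C C) 1 + (TensorProduct.mk k C C).flip 1))
        ⊓ Submodule.comap Δ
            (LinearMap.range (TensorProduct.map (𝒞 0).subtype (𝒞 0).subtype))) := by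
  have hle_even : evenPreimage 𝒞 Δ ≤ 𝒞 0 := evenPreimage_le_even hcounit_l
  refine ⟨hle_even, fun x hx => comul_mem_range_map_evenPreimage hΔ_graded_even hcoassoc hx,
    fun _ => le_evenPreimage,
    ⟨one_mem_evenPreimage hΔ_one, fun _ _ => mul_mem_evenPreimage hM2 hΔ_mul⟩,
    le_antisymm ?_ (inf_le_inf_left _ hle_even)⟩
  rintro x ⟨hprim, heven⟩
  have hΔx : Δ x = 1 ⊗ₜ x + x ⊗ₜ 1 := sub_eq_zero.1 (by simpa using hprim)
  exact ⟨hprim, primitive_mem_evenPreimage heven hΔx⟩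

/-- Let `C` be a hyper-superalgebra (a connected superbialgebra, not
necessarily super-commutative) over a field of characteristic ≠ 2, with coproduct `Δ`,
counit `ε`, and Koszul-signed multiplication `M2` on `C ⊗ C`.  Let
`C̲ = Δ⁻¹(C₀ ⊗ C₀)`.  Then `C̲` is the largest purely even super-subcoalgebra of `C`,
it is a (Hopf) subalgebra, and the even primitives satisfy `P(C)₀ = P(C̲)`,
i.e. `P(C) ⊓ C₀ = P(C) ⊓ C̲`. -/
theorem even_part_of_hyper_superalgebra
    (k : Type*) [Field k] (hchar : (2 : k) ≠ 0)
    (C : Type*) [Ring C] [Algebra k C]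
    (𝒞 : ZMod 2 → Submodule k C) [GradedAlgebra 𝒞]
    (Δ : C →ₗ[k] C ⊗[k] C) (ε : C →ₗ[k] k)
    -- Koszul (super) multiplication on `C ⊗ C`:
    (M2 : C ⊗[k] C →ₗ[k] C ⊗[k] C →ₗ[k] C ⊗[k] C)
    (hM2 : ∀ (i j : ZMod 2) (a : C), ∀ b ∈ 𝒞 i, ∀ c ∈ 𝒞 j, ∀ d : C,
      M2 (a ⊗ₜ[k] b) (c ⊗ₜ[k] d) = ((-1 : ℤ) ^ (i.val * j.val)) • ((a * c) ⊗ₜ[k] (b * d)))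
    -- superbialgebra axioms:
    (hΔ_one : Δ 1 = 1 ⊗ₜ[k] 1)
    (hΔ_mul : ∀ x y : C, Δ (x * y) = M2 (Δ x) (Δ y))
    (hcoassoc : (TensorProduct.assoc k C C C).toLinearMap ∘ₗ (LinearMap.rTensor C Δ) ∘ₗ Δ
        = (LinearMap.lTensor C Δ) ∘ₗ Δ)
    (hcounit_l : ∀ x : C, (TensorProduct.lid k C) ((LinearMap.rTensor C ε) (Δ x)) = x)
    (hcounit_r : ∀ x : C, (TensorProduct.rid k C) ((LinearMap.lTensor C ε) (Δ x)) = x)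
    (hε_one : ε 1 = 1)
    -- the comultiplication is graded (a supercoalgebra): even/odd parts map correctly
    (hΔ_graded_even : ∀ x ∈ 𝒞 0, Δ x ∈
        LinearMap.range (TensorProduct.map (𝒞 0).subtype (𝒞 0).subtype) ⊔
        LinearMap.range (TensorProduct.map (𝒞 1).subtype (𝒞 1).subtype))
    (hΔ_graded_odd : ∀ x ∈ 𝒞 1, Δ x ∈
        LinearMap.range (TensorProduct.map (𝒞 0).subtype (𝒞 1).subtype) ⊔
        LinearMap.range (TensorProduct.map (𝒞 1).subtype (𝒞 0).subtype)) :
    -- define `C̲ := Δ⁻¹(C₀ ⊗ C₀)`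
    (Submodule.comap Δ
        (LinearMap.range (TensorProduct.map (𝒞 0).subtype (𝒞 0).subtype)) ≤ 𝒞 0) ∧
    -- `C̲` is a subcoalgebra
    (∀ x ∈ Submodule.comap Δ
        (LinearMap.range (TensorProduct.map (𝒞 0).subtype (𝒞 0).subtype)),
      Δ x ∈ LinearMap.range (TensorProduct.map
        (Submodule.comap Δ
          (LinearMap.range (TensorProduct.map (𝒞 0).subtype (𝒞 0).subtype))).subtype
        (Submodule.comap Δ
          (LinearMap.range (TensorProduct.map (𝒞 0).subtype (𝒞 0).subtype))).subtype)) ∧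
    -- it is the largest purely even subcoalgebra: every subcoalgebra contained in `C₀`
    -- is contained in `C̲`
    (∀ V : Submodule k C, V ≤ 𝒞 0 →
      (∀ x ∈ V, Δ x ∈ LinearMap.range (TensorProduct.map V.subtype V.subtype)) →
      V ≤ Submodule.comap Δ
        (LinearMap.range (TensorProduct.map (𝒞 0).subtype (𝒞 0).subtype))) ∧
    -- `C̲` is a subalgebra (hence a Hopf subalgebra of `C`, a hyper-algebra)
    ((1 : C) ∈ Submodule.comap Δ
        (LinearMap.range (TensorProduct.map (𝒞 0).subtype (𝒞 0).subtype)) ∧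
      ∀ x y : C,
        x ∈ Submodule.comap Δ
          (LinearMap.range (TensorProduct.map (𝒞 0).subtype (𝒞 0).subtype)) →
        y ∈ Submodule.comap Δ
          (LinearMap.range (TensorProduct.map (𝒞 0).subtype (𝒞 0).subtype)) →
        x * y ∈ Submodule.comap Δ
          (LinearMap.range (TensorProduct.map (𝒞 0).subtype (𝒞 0).subtype))) ∧
    -- even primitives: `P(C) ⊓ C₀ = P(C) ⊓ C̲`
    (LinearMap.ker (Δ - ((TensorProduct.mk k C C) 1 + (TensorProduct.mk k C C).flip 1))
        ⊓ 𝒞 0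
      = LinearMap.ker (Δ - ((TensorProduct.mk k C C) 1 + (TensorProduct.mk k C C).flip 1))
        ⊓ Submodule.comap Δ
            (LinearMap.range (TensorProduct.map (𝒞 0).subtype (𝒞 0).subtype))) :=
  even_part_of_hyper_superalgebra_general k C 𝒞 Δ ε M2 hM2 hΔ_one hΔ_mul hcoassoc hcounit_l
    hΔ_graded_even
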